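/- arXiv:2512.08966 — 3 statements merged into one kernel-verified Lean document; each statement's English description precedes it below -/
import Mathlib

section
/- Let (λ_j)_{j≥1} be a nondecreasing sequence of positive real numbers tending to infinity, and let R(Λ) := Σ_{j≥1} (Λ − λ_j)_+ be its Riesz mean. Then for every integer k ≥ 1, the Cesàro average satisfies (1/k) Σ_{j=1}^k λ_j = sup_{Λ>0} ( Λ − R(Λ)/k ). -/
open scoped BigOperators

/-- The (order-1) Riesz mean of a sequence `λ_j = f j` (indices `j ≥ 1`):
`R(Λ) = Σ_{j≥1} (Λ − λ_j)_+`. -/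
noncomputable def RieszMean (f : ℕ → ℝ) (Λ : ℝ) : ℝ :=
  ∑' j : ℕ, max (Λ - f (j + 1)) 0

/-- The Cesàro average `A(k) = (1/k) Σ_{j=1}^k λ_j`. -/
noncomputable def CesaroAvg (f : ℕ → ℝ) (k : ℕ) : ℝ :=
  (∑ j ∈ Finset.Icc 1 k, f j) / k

/-- The counting function `N(τ) = #{ j ≥ 1 : λ_j < τ }`. -/
noncomputable def Counting (f : ℕ → ℝ) (τ : ℝ) : ℕ :=
  Nat.card {j : ℕ // 1 ≤ j ∧ f j < τ}

/-!
For every `Λ`, dropping the positive parts of the first `k` Riesz terms gives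
`R(Λ) ≥ Σ_{j ≤ k} (Λ - λ_j) = kΛ - k A(k)`, i.e. `Λ - R(Λ)/k ≤ A(k)`. For `λ_k ≤ Λ ≤ λ_{k+1}`
monotonicity makes exactly the first `k` Riesz terms positive, so equality holds there, and the
supremum is attained at `Λ = λ_{k+1} > 0`.
-/

open Finset Filter

theorem sum_Icc_one_eq_sum_range_succ (f : ℕ → ℝ) (k : ℕ) :
    ∑ j ∈ Icc 1 k, f j = ∑ j ∈ range k, f (j + 1) := by
  rw [range_eq_Ico, sum_Ico_add', zero_add, Ico_add_one_right_eq_Icc]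

theorem summable_rieszTerm {f : ℕ → ℝ} (htend : Tendsto f atTop atTop) (Λ : ℝ) :
    Summable fun j ↦ max (Λ - f (j + 1)) 0 := by
  obtain ⟨N, hN⟩ := eventually_atTop.mp (htend.eventually_ge_atTop Λ)
  refine summable_of_ne_finset_zero (s := range N) fun j hj ↦ ?_
  have : Λ ≤ f (j + 1) := hN _ (by rw [mem_range] at hj; omega)
  simpa using this

theorem mul_sub_sum_le_rieszMean {f : ℕ → ℝ} (htend : Tendsto f atTop atTop) (Λ : ℝ) (k : ℕ) :
    k * Λ - ∑ j ∈ Icc 1 k, f j ≤ RieszMean f Λ := by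
  calc k * Λ - ∑ j ∈ Icc 1 k, f j = ∑ j ∈ range k, (Λ - f (j + 1)) := by
        simp [sum_sub_distrib, sum_Icc_one_eq_sum_range_succ]
    _ ≤ ∑ j ∈ range k, max (Λ - f (j + 1)) 0 := sum_le_sum fun _ _ ↦ le_max_left _ _
    _ ≤ RieszMean f Λ :=
        (summable_rieszTerm htend Λ).sum_le_tsum _ fun _ _ ↦ le_max_right _ _

theorem rieszMean_eq_mul_sub_sum {f : ℕ → ℝ} (hmono : Monotone f) {k : ℕ} {Λ : ℝ}
    (hlow : f k ≤ Λ) (hhigh : Λ ≤ f (k + 1)) :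
    RieszMean f Λ = k * Λ - ∑ j ∈ Icc 1 k, f j := by
  have hzero : ∀ j ∉ range k, max (Λ - f (j + 1)) 0 = 0 := fun j hj ↦ by
    have : Λ ≤ f (j + 1) := hhigh.trans (hmono (by rw [mem_range] at hj; omega))
    simpa using this
  have hpos : ∀ j ∈ range k, max (Λ - f (j + 1)) 0 = Λ - f (j + 1) := fun j hj ↦ by
    have : f (j + 1) ≤ Λ := (hmono (by rw [mem_range] at hj; omega)).trans hlow
    simpa using this
  rw [RieszMean, tsum_eq_sum hzero, sum_congr rfl hpos]
  simp [sum_sub_distrib, sum_Icc_one_eq_sum_range_succ]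

theorem sub_rieszMean_div_le_cesaroAvg {f : ℕ → ℝ} (htend : Tendsto f atTop atTop) {k : ℕ}
    (hk : 0 < k) (Λ : ℝ) : Λ - RieszMean f Λ / k ≤ CesaroAvg f k := by
  have hk' : (0 : ℝ) < k := by exact_mod_cast hk
  rw [CesaroAvg, sub_le_iff_le_add, ← add_div, le_div_iff₀ hk']
  linarith [mul_sub_sum_le_rieszMean htend Λ k]

theorem cesaroAvg_eq_sub_rieszMean_div {f : ℕ → ℝ} (hmono : Monotone f) {k : ℕ} (hk : 0 < k)
    {Λ : ℝ} (hlow : f k ≤ Λ) (hhigh : Λ ≤ f (k + 1)) :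
    CesaroAvg f k = Λ - RieszMean f Λ / k := by
  have hk' : (k : ℝ) ≠ 0 := by positivity
  rw [CesaroAvg, rieszMean_eq_mul_sub_sum hmono hlow hhigh]
  field_simp
  ring

/-- Variational representation of Cesàro means:
`(1/k) Σ_{j=1}^k λ_j = sup_{Λ>0} (Λ − R(Λ)/k)`. -/
theorem cesaro_eq_sup_riesz (f : ℕ → ℝ)
    (hpos : ∀ j, 0 < f j) (hmono : Monotone f)
    (htend : Filter.Tendsto f Filter.atTop Filter.atTop)
    (k : ℕ) (hk : 1 ≤ k) :
    CesaroAvg f k = sSup ((fun Λ : ℝ => Λ - RieszMean f Λ / k) '' Set.Ioi 0) := by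
  have hgreatest :
      IsGreatest ((fun Λ : ℝ => Λ - RieszMean f Λ / k) '' Set.Ioi 0) (CesaroAvg f k) :=
    ⟨⟨f (k + 1), hpos _, (cesaroAvg_eq_sub_rieszMean_div hmono hk (hmono k.le_succ) le_rfl).symm⟩,
      by rintro _ ⟨Λ, -, rfl⟩; exact sub_rieszMean_div_le_cesaroAvg htend hk Λ⟩
  exact hgreatest.csSup_eq.symm
end

section
/- Let (λ_j)_{j≥1} be a nondecreasing sequence of positive real numbers tending to infinity, let k ≥ 1 be an integer, and set Φ(Λ) := Λ − R(Λ)/k where R(Λ) := Σ_{j≥1} (Λ − λ_j)_+. Then every Λ* in the interval [λ_k, λ_{k+1}) is a global maximizer of Φ on (0,∞): for every Λ > 0, Φ(Λ) ≤ Φ(Λ*). -/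
open scoped BigOperators

/-!
Past its first `k` terms `R(Λ*)` vanishes and before them it is linear, so
`R(Λ*) = Σ_{j ≤ k} (Λ* − λ_j)`; for any `Λ`, the same `k` terms bound `R(Λ)` from below by
`Σ_{j ≤ k} (Λ − λ_j)`. Subtracting gives `R(Λ) − R(Λ*) ≥ k (Λ − Λ*)`, i.e. `Φ(Λ) ≤ Φ(Λ*)`.
-/

open Finset

namespace RieszMean

variable {f : ℕ → ℝ}

theorem summable_terms (htend : Filter.Tendsto f Filter.atTop Filter.atTop) (Λ : ℝ) :
    Summable fun j : ℕ => max (Λ - f (j + 1)) 0 := by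
  obtain ⟨N, hN⟩ := Filter.tendsto_atTop.mp htend Λ |>.exists_forall_of_atTop
  refine summable_of_ne_finset_zero (s := range N) fun j hj => ?_
  have hΛ : Λ ≤ f (j + 1) := hN (j + 1) (by simp at hj; omega)
  exact max_eq_right (sub_nonpos.mpr hΛ)

theorem eq_sum_range (hmono : Monotone f) {k : ℕ} {Λ : ℝ}
    (h₁ : f k ≤ Λ) (h₂ : Λ ≤ f (k + 1)) :
    RieszMean f Λ = ∑ j ∈ range k, (Λ - f (j + 1)) := by
  rw [RieszMean, tsum_eq_sum (s := range k) fun j hj => ?_]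
  · refine sum_congr rfl fun j hj => max_eq_left ?_
    exact sub_nonneg.mpr <| (hmono <| by simp at hj; omega).trans h₁
  · exact max_eq_right <| sub_nonpos.mpr <| h₂.trans <| hmono <| by simp at hj; omega

theorem sum_range_sub_le (htend : Filter.Tendsto f Filter.atTop Filter.atTop) (k : ℕ) (Λ : ℝ) :
    ∑ j ∈ range k, (Λ - f (j + 1)) ≤ RieszMean f Λ :=
  calc ∑ j ∈ range k, (Λ - f (j + 1))
      ≤ ∑ j ∈ range k, max (Λ - f (j + 1)) 0 := sum_le_sum fun _ _ => le_max_left _ _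
    _ ≤ RieszMean f Λ := (summable_terms htend Λ).sum_le_tsum _ fun _ _ => le_max_right _ _

theorem add_mul_sub_le (hmono : Monotone f) (htend : Filter.Tendsto f Filter.atTop Filter.atTop)
    {k : ℕ} {Λstar : ℝ} (h₁ : f k ≤ Λstar) (h₂ : Λstar ≤ f (k + 1)) (Λ : ℝ) :
    RieszMean f Λstar + k * (Λ - Λstar) ≤ RieszMean f Λ :=
  calc RieszMean f Λstar + k * (Λ - Λstar)
      = ∑ j ∈ range k, (Λ - f (j + 1)) := by
        have hconst : (k : ℝ) * (Λ - Λstar) = ∑ _j ∈ range k, (Λ - Λstar) := by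
          rw [sum_const, card_range, nsmul_eq_mul]
        rw [eq_sum_range hmono h₁ h₂, hconst, ← sum_add_distrib]
        exact sum_congr rfl fun _ _ => by ring
    _ ≤ RieszMean f Λ := sum_range_sub_le htend k Λ

end RieszMean

theorem phi_global_max_general (f : ℕ → ℝ)
    (hmono : Monotone f)
    (htend : Filter.Tendsto f Filter.atTop Filter.atTop)
    (k : ℕ) (hk : 1 ≤ k) (Λstar : ℝ)
    (h₁ : f k ≤ Λstar) (h₂ : Λstar < f (k + 1)) :
    ∀ Λ : ℝ, 0 < Λ →
      Λ - RieszMean f Λ / k ≤ Λstar - RieszMean f Λstar / k := by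
  intro Λ _
  have hk : (0 : ℝ) < k := by exact_mod_cast hk
  have hgap := RieszMean.add_mul_sub_le hmono htend h₁ h₂.le Λ
  have hslope : Λ - Λstar ≤ (RieszMean f Λ - RieszMean f Λstar) / k := by
    rw [le_div_iff₀ hk]
    linarith
  rw [sub_div] at hslope
  linarith

/-- Every `Λ* ∈ [λ_k, λ_{k+1})` globally maximizes `Φ(Λ) = Λ − R(Λ)/k`
on `(0,∞)`. -/
theorem phi_global_max (f : ℕ → ℝ)
    (hpos : ∀ j, 0 < f j) (hmono : Monotone f)
    (htend : Filter.Tendsto f Filter.atTop Filter.atTop)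
    (k : ℕ) (hk : 1 ≤ k) (Λstar : ℝ)
    (h₁ : f k ≤ Λstar) (h₂ : Λstar < f (k + 1)) :
    ∀ Λ : ℝ, 0 < Λ →
      Λ - RieszMean f Λ / k ≤ Λstar - RieszMean f Λstar / k :=
  phi_global_max_general f hmono htend k hk Λstar h₁ h₂
end

section
/- Let (a_j)_{j≥1} and (b_j)_{j≥1} be two nondecreasing sequences of positive real numbers tending to infinity, with Riesz means R_a(Λ) := Σ_{j≥1} (Λ − a_j)_+ and R_b(Λ) := Σ_{j≥1} (Λ − b_j)_+. Suppose R_a(Λ) ≤ R_b(Λ) for every Λ > 0, and in addition R_a(b_k) < R_b(b_k) for some integer k ≥ 1. Then the strict inequality (1/k) Σ_{j=1}^k a_j > (1/k) Σ_{j=1}^k b_j holds. -/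
open scoped BigOperators

/-!
At `Λ = b_k` exactly the first `k` terms of `R_b` are nonzero, so `R_b(b_k) = k b_k − Σ_{j≤k} b_j`,
while dropping the positive parts gives `R_a(b_k) ≥ k b_k − Σ_{j≤k} a_j` for any sequence.
Hence `R_a(b_k) < R_b(b_k)` yields `Σ_{j≤k} b_j < Σ_{j≤k} a_j`.
-/

open Finset Filter

lemma Finset.sum_Icc_one_eq_sum_range {M : Type*} [AddCommMonoid M] (f : ℕ → M) (k : ℕ) :
    ∑ j ∈ Icc 1 k, f j = ∑ j ∈ range k, f (j + 1) := by
  rw [← Ico_add_one_right_eq_Icc, sum_Ico_eq_sum_range]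
  simp only [add_tsub_cancel_right, add_comm 1]

lemma natCast_mul_CesaroAvg (f : ℕ → ℝ) (k : ℕ) :
    k * CesaroAvg f k = ∑ j ∈ Icc 1 k, f j := by
  rcases eq_or_ne k 0 with rfl | hk
  · simp
  · rw [CesaroAvg, mul_div_cancel₀ _ (Nat.cast_ne_zero.mpr hk)]

lemma natCast_mul_sub_sum_Icc_one (f : ℕ → ℝ) (k : ℕ) (Λ : ℝ) :
    k * Λ - ∑ j ∈ Icc 1 k, f j = ∑ j ∈ range k, (Λ - f (j + 1)) := by
  rw [sum_Icc_one_eq_sum_range, sum_sub_distrib, sum_const, card_range, nsmul_eq_mul]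

lemma summable_RieszMean_terms {f : ℕ → ℝ} (hf : Tendsto f atTop atTop) (Λ : ℝ) :
    Summable fun j ↦ max (Λ - f (j + 1)) 0 := by
  obtain ⟨N, hN⟩ := (tendsto_atTop.mp hf Λ).exists_forall_of_atTop
  refine summable_of_ne_finset_zero (s := range N) fun j hj ↦ ?_
  have : Λ ≤ f (j + 1) := hN _ (by simp only [mem_range, not_lt] at hj; omega)
  exact max_eq_right (sub_nonpos.mpr this)

lemma natCast_mul_sub_sum_le_RieszMean {f : ℕ → ℝ} (hf : Tendsto f atTop atTop)
    (k : ℕ) (Λ : ℝ) : k * Λ - ∑ j ∈ Icc 1 k, f j ≤ RieszMean f Λ :=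
  calc k * Λ - ∑ j ∈ Icc 1 k, f j = ∑ j ∈ range k, (Λ - f (j + 1)) :=
        natCast_mul_sub_sum_Icc_one f k Λ
    _ ≤ ∑ j ∈ range k, max (Λ - f (j + 1)) 0 := sum_le_sum fun _ _ ↦ le_max_left _ _
    _ ≤ RieszMean f Λ :=
        (summable_RieszMean_terms hf Λ).sum_le_tsum _ fun _ _ ↦ le_max_right _ _

lemma RieszMean_eq_natCast_mul_sub_sum {f : ℕ → ℝ} (hf : Monotone f) {k : ℕ} {Λ : ℝ}
    (hk : f k ≤ Λ) (hk' : Λ ≤ f (k + 1)) :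
    RieszMean f Λ = k * Λ - ∑ j ∈ Icc 1 k, f j := by
  rw [RieszMean, tsum_eq_sum (s := range k), natCast_mul_sub_sum_Icc_one]
  · refine sum_congr rfl fun j hj ↦ max_eq_left (sub_nonneg.mpr ?_)
    exact (hf (mem_range.mp hj)).trans hk
  · intro j hj
    refine max_eq_right (sub_nonpos.mpr (hk'.trans (hf ?_)))
    simpa using hj

theorem cesaro_polya_strict_general (a b : ℕ → ℝ)
    (hatend : Filter.Tendsto a Filter.atTop Filter.atTop)
    (hbmono : Monotone b)
    (k : ℕ)
    (hstrict : RieszMean a (b k) < RieszMean b (b k)) :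
    CesaroAvg b k < CesaroAvg a k := by
  have hsum : ∑ j ∈ Icc 1 k, b j < ∑ j ∈ Icc 1 k, a j := by
    have := (natCast_mul_sub_sum_le_RieszMean hatend k (b k)).trans_lt <|
      hstrict.trans_eq (RieszMean_eq_natCast_mul_sub_sum hbmono le_rfl (hbmono k.le_succ))
    linarith
  rw [← natCast_mul_CesaroAvg, ← natCast_mul_CesaroAvg] at hsum
  exact lt_of_mul_lt_mul_left hsum k.cast_nonneg

/-- Strict Cesàro–Pólya inequality: strict ordering of Riesz means at the
maximizing energy `Λ = b_k` forces strict ordering of Cesàro averages. -/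
theorem cesaro_polya_strict (a b : ℕ → ℝ)
    (hapos : ∀ j, 0 < a j) (hamono : Monotone a)
    (hatend : Filter.Tendsto a Filter.atTop Filter.atTop)
    (hbpos : ∀ j, 0 < b j) (hbmono : Monotone b)
    (hbtend : Filter.Tendsto b Filter.atTop Filter.atTop)
    (hR : ∀ Λ : ℝ, 0 < Λ → RieszMean a Λ ≤ RieszMean b Λ)
    (k : ℕ) (hk : 1 ≤ k)
    (hstrict : RieszMean a (b k) < RieszMean b (b k)) :
    CesaroAvg b k < CesaroAvg a k :=
  cesaro_polya_strict_general a b hatend hbmono k hstrict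
end
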